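/- In A = k[x,y,z]/(xy + z²) with I = (x,z), the symbolic powers satisfy: I^(2j) = (x^j) and I^(2j+1) = (x^j)·(x,z) = (x^{j+1}, x^j z) for all j ≥ 1 (as stated in the table: I^(1)=(x,z), I^(2)=(x), I^(3)=(x²,xz), I^(4)=(x²), I^(5)=(x³,x²z)). -/

import Mathlib

/-
Since `z² = -xy`, the square of `I = (x, z)` lies in `(x)`, hence `I³ ⊆ x·I = (x², xz)`; and `y ∉ I`
multiplies `x·I` into `z²·I ⊆ I³`. Conversely let `as ∈ I³` with `s ∉ I`. Modulo `x` the ring is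
`k[y,z]/(z²)` and `z` does not divide `s` there, so `a ∈ (x)`, say `a = xb`. As `x` is a
non-zero-divisor (it does not divide `xy + z²` in the UFD `k[x,y,z]`), `xbs ∈ x·I` gives `bs ∈ I`,
and `b ∈ I` because `I` is prime.
-/

open MvPolynomial

/-- The coordinate ring `k[x,y,z]/(xy + z^2)` of an `A₁` surface singularity. -/
noncomputable def A1Ring (k : Type*) [Field k] : Type _ :=
  MvPolynomial (Fin 3) k ⧸
    Ideal.span {(X 0 * X 1 + X 2 ^ 2 : MvPolynomial (Fin 3) k)}

noncomputable instance (k : Type*) [Field k] : CommRing (A1Ring k) :=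
  Ideal.Quotient.commRing _

noncomputable def A1x (k : Type*) [Field k] : A1Ring k :=
  Ideal.Quotient.mk _ (X 0)

noncomputable def A1z (k : Type*) [Field k] : A1Ring k :=
  Ideal.Quotient.mk _ (X 2)

namespace MvPolynomial

variable {σ R : Type*} [CommRing R]

theorem sub_aeval_mem_of_forall_X_sub_mem {J : Ideal (MvPolynomial σ R)} {f : σ → MvPolynomial σ R}
    (hf : ∀ i, X i - f i ∈ J) (p : MvPolynomial σ R) : p - aeval f p ∈ J := by
  have hmk : (Ideal.Quotient.mkₐ R J).comp (aeval f) = Ideal.Quotient.mkₐ R J :=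
    algHom_ext fun i => by simpa [Ideal.Quotient.eq] using J.neg_mem (hf i)
  rw [← Ideal.Quotient.eq]
  exact (DFunLike.congr_fun hmk p).symm

open Classical in
noncomputable def killVars (s : Set σ) : MvPolynomial σ R →ₐ[R] MvPolynomial σ R :=
  aeval fun i => if i ∈ s then 0 else X i

@[simp]
theorem killVars_X_of_mem {s : Set σ} {i : σ} (hi : i ∈ s) :
    killVars s (X i : MvPolynomial σ R) = 0 := by
  simp [killVars, hi]

@[simp]
theorem killVars_X_of_notMem {s : Set σ} {i : σ} (hi : i ∉ s) :
    killVars s (X i : MvPolynomial σ R) = X i := by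
  simp [killVars, hi]

theorem sub_killVars_mem_span (s : Set σ) (p : MvPolynomial σ R) :
    p - killVars s p ∈ Ideal.span (X '' s) := by
  refine sub_aeval_mem_of_forall_X_sub_mem (fun i => ?_) p
  by_cases hi : i ∈ s
  · simpa [hi] using Ideal.subset_span (Set.mem_image_of_mem X hi)
  · simp [hi]

theorem ker_killVars (s : Set σ) :
    RingHom.ker (killVars s : MvPolynomial σ R →ₐ[R] MvPolynomial σ R) = Ideal.span (X '' s) := by
  refine le_antisymm (fun p hp => ?_) (Ideal.span_le.mpr ?_)
  · simpa [RingHom.mem_ker.mp hp] using sub_killVars_mem_span s p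
  · rintro _ ⟨i, hi, rfl⟩
    exact killVars_X_of_mem hi

theorem isPrime_span_X_image [IsDomain R] (s : Set σ) :
    (Ideal.span (X '' s : Set (MvPolynomial σ R))).IsPrime :=
  ker_killVars (R := R) s ▸ RingHom.ker_isPrime _

end MvPolynomial

theorem Ideal.Quotient.isLeftRegular_mk_of_prime {R : Type*} [CommRing R] [IsDomain R] {p f : R}
    (hp : Prime p) (hpf : ¬ p ∣ f) : IsLeftRegular (Ideal.Quotient.mk (Ideal.span {f}) p) := by
  intro a b hab
  obtain ⟨a, rfl⟩ := Ideal.Quotient.mk_surjective a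
  obtain ⟨b, rfl⟩ := Ideal.Quotient.mk_surjective b
  simp only [← map_mul, Ideal.Quotient.eq, Ideal.mem_span_singleton, ← mul_sub] at hab ⊢
  obtain ⟨g, hg⟩ := hab
  obtain ⟨g', rfl⟩ := (hp.dvd_or_dvd ⟨_, hg.symm⟩).resolve_left hpf
  exact ⟨g', mul_left_cancel₀ hp.ne_zero (by rw [hg]; ring)⟩

noncomputable def A1y (k : Type*) [Field k] : A1Ring k :=
  Ideal.Quotient.mk _ (X 1)

namespace A1Ring

variable {k : Type*} [Field k]

theorem not_X_zero_dvd_relation : ¬ (X 0 : MvPolynomial (Fin 3) k) ∣ X 0 * X 1 + X 2 ^ 2 := by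
  intro h
  have h2 : (X 0 : MvPolynomial (Fin 3) k) ∣ X 2 :=
    X_prime.dvd_of_dvd_pow ((dvd_add_right (dvd_mul_right _ _)).mp h)
  exact absurd (X_dvd_X.mp h2) (by decide)

theorem relation_mem_span_X_zero_X_two :
    (X 0 * X 1 + X 2 ^ 2 : MvPolynomial (Fin 3) k) ∈ Ideal.span {X 0, X 2} :=
  Ideal.mem_span_pair.mpr ⟨X 1, X 2, by ring⟩

theorem mem_span_X_zero_sup_of_mul_mem {p q : MvPolynomial (Fin 3) k}
    (hpq : p * q ∈ Ideal.span {X 0} ⊔ Ideal.span {X 0 * X 1 + X 2 ^ 2})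
    (hq : q ∉ Ideal.span {X 0, X 2}) :
    p ∈ Ideal.span {X 0} ⊔ Ideal.span {X 0 * X 1 + X 2 ^ 2} := by
  have hX0 (r : MvPolynomial (Fin 3) k) : X 0 ∣ r - killVars {0} r := by
    simpa [Ideal.mem_span_singleton] using sub_killVars_mem_span {(0 : Fin 3)} r
  obtain ⟨_, hu, _, hv, huv⟩ := Submodule.mem_sup.mp hpq
  obtain ⟨u, rfl⟩ := Ideal.mem_span_singleton'.mp hu
  obtain ⟨v, rfl⟩ := Ideal.mem_span_singleton'.mp hv
  -- at `x = 0` the relation becomes `z²`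
  have hkill : killVars {0} p * killVars {0} q = X 2 ^ 2 * killVars {0} v := by
    simpa [mul_comm] using congrArg (killVars {(0 : Fin 3)}) huv.symm
  have hzq : ¬ X 2 ∣ killVars {0} q := by
    rintro ⟨w, hw⟩
    obtain ⟨t, ht⟩ := hX0 q
    exact hq (Ideal.mem_span_pair.mpr ⟨t, w, by linear_combination -ht - hw⟩)
  obtain ⟨w, hw⟩ := X_prime.pow_dvd_of_dvd_mul_right 2 hzq ⟨_, hkill⟩
  obtain ⟨t, ht⟩ := hX0 p
  refine Submodule.mem_sup.mpr
    ⟨X 0 * (t - X 1 * w), Ideal.mem_span_singleton'.mpr ⟨_, mul_comm _ _⟩,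
      (X 0 * X 1 + X 2 ^ 2) * w, Ideal.mem_span_singleton'.mpr ⟨_, mul_comm _ _⟩, ?_⟩
  linear_combination -ht - hw

variable (k) in
noncomputable def mk : MvPolynomial (Fin 3) k →+* A1Ring k :=
  Ideal.Quotient.mk _

theorem mk_surjective : Function.Surjective (mk k) :=
  Ideal.Quotient.mk_surjective

theorem ker_mk : RingHom.ker (mk k) = Ideal.span {X 0 * X 1 + X 2 ^ 2} :=
  Ideal.mk_ker

theorem mk_mem_map_mk_iff {J : Ideal (MvPolynomial (Fin 3) k)} {p : MvPolynomial (Fin 3) k} :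
    mk k p ∈ J.map (mk k) ↔ p ∈ J ⊔ Ideal.span {X 0 * X 1 + X 2 ^ 2} := by
  rw [← Ideal.mem_comap, Ideal.comap_map_of_surjective' _ mk_surjective, ker_mk]

theorem x_mul_y : A1x k * A1y k = -A1z k ^ 2 := by
  have h : mk k (X 0 * X 1 + X 2 ^ 2) = 0 := by
    rw [← RingHom.mem_ker, ker_mk]
    exact Ideal.mem_span_singleton_self _
  rw [map_add, map_mul, map_pow] at h
  exact eq_neg_of_add_eq_zero_left h

theorem span_x_eq_map :
    (Ideal.span {A1x k} : Ideal (A1Ring k)) = (Ideal.span {X 0}).map (mk k) := by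
  rw [Ideal.map_span, Set.image_singleton]
  rfl

theorem span_x_z_eq_map :
    (Ideal.span {A1x k, A1z k} : Ideal (A1Ring k)) = (Ideal.span {X 0, X 2}).map (mk k) := by
  rw [Ideal.map_span, Set.image_pair]
  rfl

theorem mk_mem_span_x_z_iff (p : MvPolynomial (Fin 3) k) :
    mk k p ∈ (Ideal.span {A1x k, A1z k} : Ideal (A1Ring k)) ↔ p ∈ Ideal.span {X 0, X 2} := by
  rw [span_x_z_eq_map, mk_mem_map_mk_iff,
    sup_eq_left.mpr ((Ideal.span_singleton_le_iff_mem _).mpr relation_mem_span_X_zero_X_two)]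

theorem isPrime_span_x_z : (Ideal.span {A1x k, A1z k} : Ideal (A1Ring k)).IsPrime := by
  have := isPrime_span_X_image (R := k) ({0, 2} : Set (Fin 3))
  rw [Set.image_pair] at this
  rw [span_x_z_eq_map]
  refine Ideal.map_isPrime_of_surjective mk_surjective ?_
  rw [ker_mk, Ideal.span_singleton_le_iff_mem]
  exact relation_mem_span_X_zero_X_two

theorem y_notMem_span_x_z : A1y k ∉ (Ideal.span {A1x k, A1z k} : Ideal (A1Ring k)) := by
  change mk k (X 1) ∉ _
  rw [mk_mem_span_x_z_iff, ← Set.image_pair, ← ker_killVars, RingHom.mem_ker]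
  simp [X_ne_zero]

theorem isLeftRegular_x : IsLeftRegular (A1x k) :=
  Ideal.Quotient.isLeftRegular_mk_of_prime (X_prime (R := k) (σ := Fin 3) (i := 0))
    not_X_zero_dvd_relation

theorem span_x_z_sq_le :
    (Ideal.span {A1x k, A1z k} : Ideal (A1Ring k)) ^ 2 ≤ Ideal.span {A1x k} := by
  rw [sq, Ideal.mul_le]
  intro r hr t ht
  obtain ⟨a, b, rfl⟩ := Ideal.mem_span_pair.mp hr
  obtain ⟨c, d, rfl⟩ := Ideal.mem_span_pair.mp ht
  refine Ideal.mem_span_singleton'.mpr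
    ⟨a * c * A1x k + (a * d + b * c) * A1z k - b * d * A1y k, ?_⟩
  linear_combination (-(b * d)) * x_mul_y (k := k)

theorem span_x_z_pow_three_le : (Ideal.span {A1x k, A1z k} : Ideal (A1Ring k)) ^ 3 ≤
    Ideal.span {A1x k} * Ideal.span {A1x k, A1z k} := by
  rw [pow_succ]
  exact Ideal.mul_mono_left span_x_z_sq_le

theorem span_x_mul_span_x_z :
    (Ideal.span {A1x k} * Ideal.span {A1x k, A1z k} : Ideal (A1Ring k)) =
      Ideal.span {A1x k ^ 2, A1x k * A1z k} := by
  rw [Ideal.span_mul_span', Set.singleton_mul, Set.image_pair, sq]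

theorem mem_span_x_of_mul_mem {a s : A1Ring k} (has : a * s ∈ Ideal.span {A1x k})
    (hs : s ∉ Ideal.span {A1x k, A1z k}) : a ∈ Ideal.span {A1x k} := by
  obtain ⟨p, rfl⟩ := mk_surjective a
  obtain ⟨q, rfl⟩ := mk_surjective s
  rw [span_x_eq_map, ← map_mul, mk_mem_map_mk_iff] at has
  rw [span_x_eq_map, mk_mem_map_mk_iff]
  exact mem_span_X_zero_sup_of_mul_mem has ((mk_mem_span_x_z_iff q).not.mp hs)

end A1Ring

open A1Ring in
/-- In `A = k[x,y,z]/(xy+z²)` with `I = (x,z)`, the third symbolic power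
`I^(3) = {a : ∃ s ∉ I, a·s ∈ I³}` equals the ideal `(x², xz)`. -/
theorem symbolic_power_three_of_A1 (k : Type*) [Field k] :
    {a : A1Ring k | ∃ s ∉ (Ideal.span {A1x k, A1z k} : Ideal (A1Ring k)),
        a * s ∈ (Ideal.span {A1x k, A1z k} : Ideal (A1Ring k)) ^ 3}
      = (Ideal.span {A1x k ^ 2, A1x k * A1z k} : Ideal (A1Ring k)) := by
  ext a
  rw [SetLike.mem_coe, ← span_x_mul_span_x_z]
  constructor
  · rintro ⟨s, hs, has⟩
    have has' := span_x_z_pow_three_le has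
    have hax : a * s ∈ Ideal.span {A1x k} := Ideal.mul_le_left has'
    obtain ⟨b, rfl⟩ := Ideal.mem_span_singleton'.mp (mem_span_x_of_mul_mem hax hs)
    obtain ⟨c, hc, hxc⟩ := Ideal.mem_span_singleton_mul.mp has'
    have hbs : b * s = c := isLeftRegular_x (show A1x k * (b * s) = A1x k * c by rw [hxc]; ring)
    refine Ideal.mem_span_singleton_mul.mpr ⟨b, ?_, mul_comm _ _⟩
    exact (isPrime_span_x_z.mem_or_mem (hbs ▸ hc)).resolve_right hs
  · intro ha
    obtain ⟨c, hc, rfl⟩ := Ideal.mem_span_singleton_mul.mp ha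
    refine ⟨A1y k, y_notMem_span_x_z, ?_⟩
    have hz2 : A1z k ^ 2 ∈ (Ideal.span {A1x k, A1z k} : Ideal (A1Ring k)) ^ 2 :=
      Ideal.pow_mem_pow (Ideal.subset_span (by simp)) 2
    have hxcy : A1x k * c * A1y k = -(c * A1z k ^ 2) := by
      linear_combination c * x_mul_y (k := k)
    rw [hxcy, pow_succ']
    exact neg_mem (Ideal.mul_mem_mul hc hz2)
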